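/- Fix m, l, g > 0, ρ ∈ ℝ, χ ∈ ℝ³, and a symmetric positive-definite 3×3 real matrix 𝕀. Let Ω, v, Γ : ℝ → ℝ³ solve the closed-loop Euler–Poincaré system. Then the energy E(t) = ½ Ω(t)·𝕀Ω(t) + m l v(t)·(Ω(t) × χ) + ½ ρ ‖v(t)‖² + m g l χ·Γ(t) is constant in t. -/

import Mathlib

/-!
Since `𝕀` is symmetric, `dE/dt = Ω·μ' + v·p' + m g l χ·Γ'`. Substituting the equations of motion
leaves only triple products, which cancel: `Ω·(μ × Ω) = 0`, `Ω·(p × v) + v·(p × Ω) = 0` and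
`Ω·(χ × Γ) = χ·(Γ × Ω)`.
-/

open Matrix

/-- The closed-loop Euler–Poincaré system: with `μ = 𝕀Ω + m l (χ × v)` and
`p = ρ v + m l (Ω × χ)`, the curves satisfy
`μ' = μ × Ω + p × v − m g l (χ × Γ)`, `p' = p × Ω`, `Γ' = Γ × Ω`. -/
def ClosedLoopEP (m l g ρ : ℝ) (χ : Fin 3 → ℝ) (I : Matrix (Fin 3) (Fin 3) ℝ)
    (Ω v Γ : ℝ → Fin 3 → ℝ) : Prop :=
  Differentiable ℝ Ω ∧ Differentiable ℝ v ∧ Differentiable ℝ Γ ∧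
  (∀ t, deriv (fun s => I *ᵥ Ω s + (m * l) • (χ ⨯₃ v s)) t
      = (I *ᵥ Ω t + (m * l) • (χ ⨯₃ v t)) ⨯₃ Ω t
        + (ρ • v t + (m * l) • (Ω t ⨯₃ χ)) ⨯₃ v t - (m * g * l) • (χ ⨯₃ Γ t)) ∧
  (∀ t, deriv (fun s => ρ • v s + (m * l) • (Ω s ⨯₃ χ)) t
      = (ρ • v t + (m * l) • (Ω t ⨯₃ χ)) ⨯₃ Ω t) ∧
  (∀ t, deriv Γ t = Γ t ⨯₃ Ω t)

theorem LinearMap.hasDerivAt_of_bilinear {𝕜 E F G : Type*} [NontriviallyNormedField 𝕜]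
    [CompleteSpace 𝕜] [NormedAddCommGroup E] [NormedSpace 𝕜 E] [FiniteDimensional 𝕜 E]
    [NormedAddCommGroup F] [NormedSpace 𝕜 F] [FiniteDimensional 𝕜 F]
    [NormedAddCommGroup G] [NormedSpace 𝕜 G]
    (B : E →ₗ[𝕜] F →ₗ[𝕜] G) {u : 𝕜 → E} {v : 𝕜 → F} {u' : E} {v' : F} {t : 𝕜}
    (hu : HasDerivAt u u' t) (hv : HasDerivAt v v' t) :
    HasDerivAt (fun s => B (u s) (v s)) (B (u t) v' + B u' (v t)) t :=
  (LinearMap.toContinuousLinearMap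
    (LinearMap.toContinuousLinearMap.toLinearMap ∘ₗ B)).hasDerivAt_of_bilinear
    (fun _ => hu) (fun _ => hv)

theorem HasDerivAt.dotProduct {n : Type*} [Fintype n] {u v : ℝ → n → ℝ} {u' v' : n → ℝ} {t : ℝ}
    (hu : HasDerivAt u u' t) (hv : HasDerivAt v v' t) :
    HasDerivAt (fun s => u s ⬝ᵥ v s) (u' ⬝ᵥ v t + u t ⬝ᵥ v') t := by
  rw [add_comm]
  exact (dotProductBilin ℝ ℝ).hasDerivAt_of_bilinear hu hv

theorem HasDerivAt.cross {u v : ℝ → Fin 3 → ℝ} {u' v' : Fin 3 → ℝ} {t : ℝ}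
    (hu : HasDerivAt u u' t) (hv : HasDerivAt v v' t) :
    HasDerivAt (fun s => u s ⨯₃ v s) (u' ⨯₃ v t + u t ⨯₃ v') t := by
  rw [add_comm]
  exact crossProduct.hasDerivAt_of_bilinear hu hv

theorem HasDerivAt.matrix_mulVec {m n : Type*} [Fintype m] [Fintype n] (A : Matrix m n ℝ)
    {u : ℝ → n → ℝ} {u' : n → ℝ} {t : ℝ} (hu : HasDerivAt u u' t) :
    HasDerivAt (fun s => A *ᵥ u s) (A *ᵥ u') t :=
  A.mulVecLin.toContinuousLinearMap.hasFDerivAt.comp_hasDerivAt t hu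

theorem Matrix.IsSymm.dotProduct_mulVec_comm {n R : Type*} [Fintype n] [CommSemiring R]
    {A : Matrix n n R} (hA : A.IsSymm) (x y : n → R) : x ⬝ᵥ A *ᵥ y = y ⬝ᵥ A *ᵥ x := by
  rw [dotProduct_mulVec, ← mulVec_transpose, hA.eq, dotProduct_comm]

theorem dotProduct_euler_poincare_field_eq_zero {R : Type*} [CommRing R]
    (μ p Ω v χ Γ : Fin 3 → R) (k : R) :
    Ω ⬝ᵥ (μ ⨯₃ Ω + p ⨯₃ v - k • (χ ⨯₃ Γ)) + v ⬝ᵥ (p ⨯₃ Ω) + k * (χ ⬝ᵥ Γ ⨯₃ Ω) = 0 := by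
  have hp : p ⬝ᵥ v ⨯₃ Ω + p ⬝ᵥ Ω ⨯₃ v = 0 := by
    rw [← dotProduct_add, cross_anticomm', dotProduct_zero]
  rw [dotProduct_sub, dotProduct_add, dotProduct_smul, dot_cross_self,
    triple_product_permutation Ω p v, triple_product_permutation v p Ω,
    triple_product_permutation Ω χ Γ, smul_eq_mul]
  linear_combination hp

noncomputable def closedLoopEnergy (m l g ρ : ℝ) (χ : Fin 3 → ℝ) (I : Matrix (Fin 3) (Fin 3) ℝ)
    (Ω v Γ : Fin 3 → ℝ) : ℝ :=
  (1 / 2) * (Ω ⬝ᵥ I *ᵥ Ω) + m * l * (v ⬝ᵥ Ω ⨯₃ χ) + (1 / 2) * ρ * (v ⬝ᵥ v)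
    + m * g * l * (χ ⬝ᵥ Γ)

theorem hasDerivAt_closedLoopEnergy {m l g ρ : ℝ} {χ : Fin 3 → ℝ}
    {I : Matrix (Fin 3) (Fin 3) ℝ} (hI : I.IsSymm) {Ω v Γ : ℝ → Fin 3 → ℝ}
    {Ω' v' Γ' : Fin 3 → ℝ} {t : ℝ} (hΩ : HasDerivAt Ω Ω' t) (hv : HasDerivAt v v' t)
    (hΓ : HasDerivAt Γ Γ' t) :
    HasDerivAt (fun s => closedLoopEnergy m l g ρ χ I (Ω s) (v s) (Γ s))
      (Ω t ⬝ᵥ (I *ᵥ Ω' + (m * l) • (χ ⨯₃ v')) + v t ⬝ᵥ (ρ • v' + (m * l) • (Ω' ⨯₃ χ))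
        + m * g * l * (χ ⬝ᵥ Γ')) t := by
  have hχ := hasDerivAt_const t χ
  have hD := ((((hΩ.dotProduct (hΩ.matrix_mulVec I)).const_mul (1 / 2)).fun_add
    ((hv.dotProduct (hΩ.cross hχ)).const_mul (m * l))).fun_add
    ((hv.dotProduct hv).const_mul ((1 / 2) * ρ))).fun_add
    ((hχ.dotProduct hΓ).const_mul (m * g * l))
  refine hD.congr_deriv ?_
  rw [hI.dotProduct_mulVec_comm Ω', triple_product_permutation v', dotProduct_comm v' (v t)]
  simp only [map_zero, add_zero, zero_dotProduct, dotProduct_add, dotProduct_smul, smul_eq_mul]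
  ring

theorem energy_constant_general (m l g ρ : ℝ)
    (χ : Fin 3 → ℝ) (I : Matrix (Fin 3) (Fin 3) ℝ) (hIsymm : Iᵀ = I)
    (Ω v Γ : ℝ → Fin 3 → ℝ) (hsol : ClosedLoopEP m l g ρ χ I Ω v Γ)
    (E : ℝ → ℝ)
    (hE : ∀ t, E t = (1 / 2) * (Ω t ⬝ᵥ I *ᵥ Ω t) + m * l * (v t ⬝ᵥ Ω t ⨯₃ χ)
        + (1 / 2) * ρ * (v t ⬝ᵥ v t) + m * g * l * (χ ⬝ᵥ Γ t)) :
    ∀ t, E t = E 0 := by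
  obtain ⟨hΩ, hv, hΓ, hμ, hp, hΓ'⟩ := hsol
  have hE' : ∀ t, HasDerivAt E 0 t := by
    intro t
    have hΩt := (hΩ t).hasDerivAt
    have hvt := (hv t).hasDerivAt
    have hχ := hasDerivAt_const t χ
    have hμt : deriv (fun s => I *ᵥ Ω s + (m * l) • (χ ⨯₃ v s)) t
        = I *ᵥ deriv Ω t + (m * l) • (χ ⨯₃ deriv v t) := by
      simpa using ((hΩt.matrix_mulVec I).fun_add ((hχ.cross hvt).fun_const_smul (m * l))).deriv
    have hpt : deriv (fun s => ρ • v s + (m * l) • (Ω s ⨯₃ χ)) t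
        = ρ • deriv v t + (m * l) • (deriv Ω t ⨯₃ χ) := by
      simpa using ((hvt.fun_const_smul ρ).fun_add ((hΩt.cross hχ).fun_const_smul (m * l))).deriv
    have hEt := hasDerivAt_closedLoopEnergy (ρ := ρ) (χ := χ) (m := m) (l := l) (g := g)
      hIsymm hΩt hvt (hΓ t).hasDerivAt
    rw [← hμt, hμ t, ← hpt, hp t, hΓ' t, dotProduct_euler_poincare_field_eq_zero] at hEt
    rwa [funext hE]
  exact fun t => is_const_of_deriv_eq_zero (fun s => (hE' s).differentiableAt)
    (fun s => (hE' s).deriv) t 0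

/-- Along solutions of the closed-loop Euler–Poincaré system, the energy
`E = ½ Ω·𝕀Ω + m l v·(Ω × χ) + ½ ρ ‖v‖² + m g l χ·Γ` is constant in time. -/
theorem energy_constant (m l g ρ : ℝ) (hm : 0 < m) (hl : 0 < l) (hg : 0 < g)
    (χ : Fin 3 → ℝ) (I : Matrix (Fin 3) (Fin 3) ℝ) (hIsymm : Iᵀ = I)
    (hIpos : ∀ x : Fin 3 → ℝ, x ≠ 0 → 0 < x ⬝ᵥ I *ᵥ x)
    (Ω v Γ : ℝ → Fin 3 → ℝ) (hsol : ClosedLoopEP m l g ρ χ I Ω v Γ)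
    (E : ℝ → ℝ)
    (hE : ∀ t, E t = (1 / 2) * (Ω t ⬝ᵥ I *ᵥ Ω t) + m * l * (v t ⬝ᵥ Ω t ⨯₃ χ)
        + (1 / 2) * ρ * (v t ⬝ᵥ v t) + m * g * l * (χ ⬝ᵥ Γ t)) :
    ∀ t, E t = E 0 :=
  energy_constant_general m l g ρ χ I hIsymm Ω v Γ hsol E hE
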